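/- Let W ⊆ ℝᵐ be open, M = closure(W), and 𝓕 = C∞(ℝᵐ)|_M. Then: (a) every smooth vector field V on ℝᵐ satisfies V(f)|_M = 0 whenever f ∈ C∞(ℝᵐ) vanishes on M; (b) a vector field V = Σ aᵢ ∂/∂xᵢ satisfies V(xᵢ)|_M = 0 for all i if and only if all aᵢ vanish on M; consequently the C∞-derivations of 𝓕 are isomorphic as a real vector space to {V|_M : V ∈ C∞(ℝᵐ, ℝᵐ)}, the restrictions to M of smooth vector fields. -/

import Mathlib

/-- A family `F` of real-valued functions is closed under composition with smooth
functions `ℝᵏ → ℝ` (in particular `F` is a `C∞`-ring of functions). -/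
def SmoothClosed {X : Type} (F : Set (X → ℝ)) : Prop :=
  ∀ (k : ℕ) (h : (Fin k → ℝ) → ℝ), ContDiff ℝ (⊤ : ℕ∞) h →
    ∀ a : Fin k → (X → ℝ), (∀ i, a i ∈ F) → (fun m => h fun i => a i m) ∈ F

/-- A `C∞`-derivation of the `C∞`-ring of functions `F`: `w` maps `F` to `F` and
satisfies the chain rule `w (h∘(a₁,…,aₖ)) = Σᵢ (∂ᵢh)∘(a₁,…,aₖ) · w(aᵢ)` for all smooth
`h : ℝᵏ → ℝ` and all `a₁,…,aₖ ∈ F`. -/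
def IsCInfDerF {X : Type} (F : Set (X → ℝ)) (w : (X → ℝ) → (X → ℝ)) : Prop :=
  (∀ f ∈ F, w f ∈ F) ∧
  ∀ (k : ℕ) (h : (Fin k → ℝ) → ℝ), ContDiff ℝ (⊤ : ℕ∞) h →
    ∀ a : Fin k → (X → ℝ), (∀ i, a i ∈ F) →
      w (fun m => h fun i => a i m)
        = fun m => ∑ i, fderiv ℝ h (fun j => a j m) (Pi.single i 1) * w (a i) m

/-- The `C∞`-ring `C∞(ℝᵐ)|_M` of restrictions of smooth functions to a subset
`M ⊆ ℝᵐ`. -/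
def RestrF (m : ℕ) (M : Set (Fin m → ℝ)) : Set (M → ℝ) :=
  {g | ∃ f : (Fin m → ℝ) → ℝ, ContDiff ℝ (⊤ : ℕ∞) f ∧ ∀ x : M, g x = f x}

/-- The action of the vector field `V = Σᵢ aᵢ ∂/∂xᵢ` on functions on `ℝᵐ`. -/
noncomputable def Vact {m : ℕ} (a : Fin m → ((Fin m → ℝ) → ℝ))
    (f : (Fin m → ℝ) → ℝ) : (Fin m → ℝ) → ℝ :=
  fun x => ∑ i, a i x * fderiv ℝ f x (Pi.single i 1)

lemma Vact_coord {m : ℕ} (a : Fin m → ((Fin m → ℝ) → ℝ)) (i : Fin m)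
    (x : Fin m → ℝ) : Vact a (fun y => y i) x = a i x := by
  have h : ∀ j : Fin m, fderiv ℝ (fun y : Fin m → ℝ => y i) x (Pi.single j 1)
      = (Pi.single j 1 : Fin m → ℝ) i := by
    intro j
    have heq : fderiv ℝ (fun y : Fin m → ℝ => y i) x
        = (ContinuousLinearMap.proj i : (Fin m → ℝ) →L[ℝ] ℝ) :=
      (ContinuousLinearMap.proj i : (Fin m → ℝ) →L[ℝ] ℝ).fderiv
    rw [heq]
    rfl
  simp only [Vact, h]
  simp [Pi.single_apply]

lemma fderiv_zero_on_closure {m : ℕ} (W : Set (Fin m → ℝ)) (hW : IsOpen W)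
    (f : (Fin m → ℝ) → ℝ) (hf : ContDiff ℝ (⊤ : ℕ∞) f) (h0 : ∀ x ∈ closure W, f x = 0) :
    ∀ x ∈ closure W, fderiv ℝ f x = 0 := by
  have hWsub : ∀ x ∈ W, fderiv ℝ f x = 0 := by
    intro x hx
    have : f =ᶠ[nhds x] (fun _ => (0:ℝ)) :=
      Filter.eventually_of_mem (hW.mem_nhds hx)
        (fun y hy => h0 y (subset_closure hy))
    rw [this.fderiv_eq, fderiv_fun_const]
    rfl
  intro x hx
  exact closure_minimal hWsub
    (isClosed_eq (hf.continuous_fderiv (by simp)) continuous_const) hx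

/-- let `W ⊆ ℝᵐ` be open, `M = closure W`, `𝓕 = C∞(ℝᵐ)|_M`.  Then
(a) every smooth vector field `V` on `ℝᵐ` satisfies `V(f)|_M = 0` whenever a smooth `f`
vanishes on `M`; (b) `V = Σ aᵢ ∂/∂xᵢ` satisfies `V(xᵢ)|_M = 0` for all `i` iff all the
coefficients `aᵢ` vanish on `M`; consequently (c) the `C∞`-derivations of `𝓕`
correspond exactly to restrictions to `M` of smooth vector fields: every derivation
is induced by a smooth vector field, and two vector fields induce the same derivation
iff their coefficients agree on `M`. -/
theorem derivations_of_closure_of_open (m : ℕ) (W : Set (Fin m → ℝ)) (hW : IsOpen W) :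
    -- (a)
    (∀ a : Fin m → ((Fin m → ℝ) → ℝ), (∀ i, ContDiff ℝ (⊤ : ℕ∞) (a i)) →
      ∀ f : (Fin m → ℝ) → ℝ, ContDiff ℝ (⊤ : ℕ∞) f → (∀ x ∈ closure W, f x = 0) →
        ∀ x ∈ closure W, Vact a f x = 0) ∧
    -- (b)
    (∀ a : Fin m → ((Fin m → ℝ) → ℝ), (∀ i, ContDiff ℝ (⊤ : ℕ∞) (a i)) →
      ((∀ i : Fin m, ∀ x ∈ closure W, Vact a (fun y => y i) x = 0) ↔
        (∀ i : Fin m, ∀ x ∈ closure W, a i x = 0))) ∧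
    -- (c) surjectivity: every C∞-derivation of 𝓕 comes from a smooth vector field
    (∀ v : (closure W → ℝ) → (closure W → ℝ), IsCInfDerF (RestrF m (closure W)) v →
      ∃ a : Fin m → ((Fin m → ℝ) → ℝ), (∀ i, ContDiff ℝ (⊤ : ℕ∞) (a i)) ∧
        ∀ f : (Fin m → ℝ) → ℝ, ContDiff ℝ (⊤ : ℕ∞) f →
          ∀ x : closure W, v (fun y : closure W => f y) x = Vact a f x) ∧
    -- (c) injectivity: the derivation only depends on the restriction `V|_M`
    (∀ a a' : Fin m → ((Fin m → ℝ) → ℝ), (∀ i, ContDiff ℝ (⊤ : ℕ∞) (a i)) →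
      (∀ i, ContDiff ℝ (⊤ : ℕ∞) (a' i)) →
      (∀ f : (Fin m → ℝ) → ℝ, ContDiff ℝ (⊤ : ℕ∞) f →
        ∀ x ∈ closure W, Vact a f x = Vact a' f x) →
      ∀ i : Fin m, ∀ x ∈ closure W, a i x = a' i x) := by
  refine ⟨?_, ?_, ?_, ?_⟩
  · -- (a)
    intro a _ f hf h0 x hx
    have := fderiv_zero_on_closure W hW f hf h0 x hx
    simp [Vact, this]
  · -- (b)
    intro a _
    constructor
    · intro h i x hx
      have := h i x hx
      rwa [Vact_coord] at this
    · intro h i x hx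
      rw [Vact_coord]
      exact h i x hx
  · -- (c) surjectivity
    intro v hv
    obtain ⟨hmem, hchain⟩ := hv
    have hcoordF : ∀ i : Fin m,
        (fun y : closure W => (y : Fin m → ℝ) i) ∈ RestrF m (closure W) := by
      intro i
      exact ⟨fun y => y i, (ContinuousLinearMap.proj i : (Fin m → ℝ) →L[ℝ] ℝ).contDiff,
        fun x => rfl⟩
    have H : ∀ i : Fin m, ∃ g : (Fin m → ℝ) → ℝ, ContDiff ℝ (⊤ : ℕ∞) g ∧
        ∀ x : closure W, v (fun y : closure W => (y : Fin m → ℝ) i) x = g x :=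
      fun i => hmem _ (hcoordF i)
    choose g hg hg' using H
    refine ⟨g, hg, ?_⟩
    intro f hf x
    have key := hchain m f hf (fun i => fun y : closure W => (y : Fin m → ℝ) i)
      hcoordF
    have : v (fun y : closure W => f ↑y) x
        = ∑ i, fderiv ℝ f (fun j => (x : Fin m → ℝ) j) (Pi.single i 1)
            * v (fun y : closure W => (y : Fin m → ℝ) i) x := by
      exact congrFun key x
    rw [this]
    simp only [Vact]
    apply Finset.sum_congr rfl
    intro i _
    rw [hg' i x, mul_comm]
  · -- (c) injectivity
    intro a a' _ _ hagree i x hx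
    have := hagree (fun y => y i)
      (ContinuousLinearMap.proj i : (Fin m → ℝ) →L[ℝ] ℝ).contDiff x hx
    rwa [Vact_coord, Vact_coord] at this
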